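/- arXiv:1512.02920 — 3 statements merged into one kernel-verified Lean document; each statement's English description precedes it below -/
import Mathlib

section
/- With the function φ defined piecewise as φ(θ) = c·sinh(μθ)/sinh(μπ/4) on [0, π/4] and φ(θ) = c·sinh(μ(π-θ))/sinh(3μπ/4) on [π/4, π] (c ≠ 0, μ > 0), and with σ⁰ = σ₋ on (0, π/4), σ⁰ = σ₊ on (π/4, π): the function u(r,θ) = r^{iμ} φ(θ) satisfies div(σ⁰ ∇u) = 0 in the half-plane sector {(r cos θ, r sin θ) : r > 0, 0 < θ < π} away from the interface θ = π/4, provided the transmission condition σ₋ φ'(π/4⁻) = σ₊ φ'(π/4⁺) holds; and this transmission condition is equivalent to σ₋ μ coth(μπ/4) = -σ₊ μ coth(3μπ/4), i.e. -σ₋/σ₊ = coth(3μπ/4)/coth(μπ/4). -/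
open Real Set

/-! On each sector `φ` is a multiple of `sinh` of an affine function of slope `±μ`, so
`φ'' = μ²φ` there. The one-sided derivatives at `π/4` are `cμ coth(μπ/4)` from the left and
`-cμ coth(3μπ/4)` from the right; dividing the transmission condition by `cμσ₊ ≠ 0` gives the
coth ratio. -/

theorem deriv_deriv_eq_of_eqOn {f g : ℝ → ℝ} {U : Set ℝ} (h : EqOn f g U) (hU : IsOpen U)
    {x : ℝ} (hx : x ∈ U) : deriv (deriv f) x = deriv (deriv g) x :=
  (h.deriv hU).deriv hU hx

theorem derivWithin_Ici_eq_of_eqOn_Icc {f g : ℝ → ℝ} {a b g' : ℝ} (hab : a < b)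
    (h : EqOn f g (Icc a b)) (hg : HasDerivAt g g' a) : derivWithin f (Ici a) a = g' :=
  (hg.hasDerivWithinAt.congr_of_eventuallyEq
    (Filter.eventually_of_mem (Icc_mem_nhdsGE hab) h) (h (left_mem_Icc.2 hab.le))).derivWithin
    (uniqueDiffWithinAt_Ici a)

theorem derivWithin_Iic_eq_of_eqOn_Icc {f g : ℝ → ℝ} {a b g' : ℝ} (hab : a < b)
    (h : EqOn f g (Icc a b)) (hg : HasDerivAt g g' b) : derivWithin f (Iic b) b = g' :=
  (hg.hasDerivWithinAt.congr_of_eventuallyEq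
    (Filter.eventually_of_mem (Icc_mem_nhdsLE hab) h) (h (right_mem_Icc.2 hab.le))).derivWithin
    (uniqueDiffWithinAt_Iic b)

section SinhComp

variable {f : ℝ → ℝ} {a : ℝ} (hf : ∀ t, HasDerivAt f a t) (c d : ℝ)
include hf

theorem hasDerivAt_mul_sinh_comp_div (t : ℝ) :
    HasDerivAt (fun s => c * sinh (f s) / d) (c * (cosh (f t) * a) / d) t :=
  (((hf t).sinh).const_mul c).div_const d

theorem deriv_deriv_mul_sinh_comp_div (t : ℝ) :
    deriv (deriv fun s => c * sinh (f s) / d) t = a ^ 2 * (c * sinh (f t) / d) := by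
  have hderiv : deriv (fun s => c * sinh (f s) / d) = fun s => c * (cosh (f s) * a) / d :=
    funext fun s => (hasDerivAt_mul_sinh_comp_div hf c d s).deriv
  rw [hderiv, ((((hf t).cosh.mul_const a).const_mul c).div_const d).deriv]
  ring

theorem deriv_deriv_eq_sq_mul_of_eqOn {φ : ℝ → ℝ} {U : Set ℝ} (hU : IsOpen U)
    (h : EqOn φ (fun s => c * sinh (f s) / d) U) {θ : ℝ} (hθ : θ ∈ U) :
    deriv (deriv φ) θ = a ^ 2 * φ θ := by
  rw [deriv_deriv_eq_of_eqOn h hU hθ, deriv_deriv_mul_sinh_comp_div hf, h hθ]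

end SinhComp

theorem mul_eq_neg_mul_iff_neg_div_eq_div {σm σp k x y : ℝ} (hk : k ≠ 0) (hσp : σp ≠ 0)
    (hx : x ≠ 0) : σm * (k * x) = σp * (-(k * y)) ↔ -σm / σp = y / x := by
  rw [div_eq_div_iff hσp hx]
  constructor
  · intro h
    exact mul_left_cancel₀ hk (by linear_combination -h)
  · intro h
    linear_combination -k * h

theorem stmt3_transmission_condition_general
    (μ c σp σm : ℝ) (hμ : 0 < μ) (hc : c ≠ 0) (hσp : 0 < σp)
    (φ : ℝ → ℝ)
    (hφ1 : ∀ θ ∈ Icc (0 : ℝ) (π/4), φ θ = c * Real.sinh (μ * θ) / Real.sinh (μ * π / 4))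
    (hφ2 : ∀ θ ∈ Icc (π/4) π, φ θ = c * Real.sinh (μ * (π - θ)) / Real.sinh (3 * μ * π / 4)) :
    (∀ θ ∈ Ioo (0 : ℝ) (π/4) ∪ Ioo (π/4) π, deriv (deriv φ) θ = μ ^ 2 * φ θ) ∧
    (σm * derivWithin φ (Iic (π/4)) (π/4) = σp * derivWithin φ (Ici (π/4)) (π/4) ↔
      -σm / σp =
        (Real.cosh (3 * μ * π / 4) / Real.sinh (3 * μ * π / 4)) /
          (Real.cosh (μ * π / 4) / Real.sinh (μ * π / 4))) := by
  have hπ4 : 0 < π / 4 := by positivity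
  have hπ4π : π / 4 < π := by linarith [pi_pos]
  have hleft (t : ℝ) : HasDerivAt (fun s => μ * s) μ t := by
    simpa using (hasDerivAt_id t).const_mul μ
  have hright (t : ℝ) : HasDerivAt (fun s => μ * (π - s)) (-μ) t := by
    simpa using ((hasDerivAt_id t).const_sub π).const_mul μ
  refine ⟨?_, ?_⟩
  · rintro θ (hθ | hθ)
    · exact deriv_deriv_eq_sq_mul_of_eqOn hleft _ _ isOpen_Ioo
        (fun t ht => hφ1 t (Ioo_subset_Icc_self ht)) hθ
    · rw [← neg_sq μ]
      exact deriv_deriv_eq_sq_mul_of_eqOn hright _ _ isOpen_Ioo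
        (fun t ht => hφ2 t (Ioo_subset_Icc_self ht)) hθ
  · have hL : derivWithin φ (Iic (π/4)) (π/4)
        = c * μ * (cosh (μ * π / 4) / sinh (μ * π / 4)) := by
      rw [derivWithin_Iic_eq_of_eqOn_Icc hπ4 hφ1 (hasDerivAt_mul_sinh_comp_div hleft _ _ _),
        mul_div_assoc μ π 4]
      ring
    have hR : derivWithin φ (Ici (π/4)) (π/4)
        = -(c * μ * (cosh (3 * μ * π / 4) / sinh (3 * μ * π / 4))) := by
      rw [derivWithin_Ici_eq_of_eqOn_Icc hπ4π hφ2 (hasDerivAt_mul_sinh_comp_div hright _ _ _),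
        show μ * (π - π / 4) = 3 * μ * π / 4 by ring]
      ring
    have hcoth : cosh (μ * π / 4) / sinh (μ * π / 4) ≠ 0 :=
      div_ne_zero (cosh_pos _).ne' (sinh_pos_iff.2 (by positivity)).ne'
    rw [hL, hR]
    exact mul_eq_neg_mul_iff_neg_div_eq_div (mul_ne_zero hc hμ.ne') hσp.ne' hcoth

/-- With `φ` piecewise as in the paper (`c ≠ 0`, `μ > 0`) and `σ⁰ = σ₋` on
`(0,π/4)`, `σ⁰ = σ₊` on `(π/4,π)`: the separated function `u = r^{iμ}φ(θ)` solves
`div(σ⁰∇u) = 0` away from the interface, which for such a separated function reduces to the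
angular ODE `φ'' = μ²φ` on `(0,π/4) ∪ (π/4,π)` (this reduction holds here); moreover the
transmission condition `σ₋ φ'(π/4⁻) = σ₊ φ'(π/4⁺)` (with one-sided derivatives) is
equivalent to `-σ₋/σ₊ = coth(3μπ/4)/coth(μπ/4)`. -/
theorem stmt3_transmission_condition
    (μ c σp σm : ℝ) (hμ : 0 < μ) (hc : c ≠ 0) (hσp : 0 < σp) (hσm : σm < 0)
    (φ : ℝ → ℝ)
    (hφ1 : ∀ θ ∈ Icc (0 : ℝ) (π/4), φ θ = c * Real.sinh (μ * θ) / Real.sinh (μ * π / 4))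
    (hφ2 : ∀ θ ∈ Icc (π/4) π, φ θ = c * Real.sinh (μ * (π - θ)) / Real.sinh (3 * μ * π / 4)) :
    (∀ θ ∈ Ioo (0 : ℝ) (π/4) ∪ Ioo (π/4) π, deriv (deriv φ) θ = μ ^ 2 * φ θ) ∧
    (σm * derivWithin φ (Iic (π/4)) (π/4) = σp * derivWithin φ (Ici (π/4)) (π/4) ↔
      -σm / σp =
        (Real.cosh (3 * μ * π / 4) / Real.sinh (3 * μ * π / 4)) /
          (Real.cosh (μ * π / 4) / Real.sinh (μ * π / 4))) :=
  stmt3_transmission_condition_general μ c σp σm hμ hc hσp φ hφ1 hφ2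
end

section
/- Let μ > 0 and κ ∈ (-1, -1/3). Then the equation -κ = coth(3μπ/4)/coth(μπ/4) determines μ uniquely and the map κ ↦ μ(κ) is continuous and satisfies μ(κ) → +∞ as κ → -1⁺. -/
/-!
The triple-argument formulas give `coth (3t) / coth t = (2 cosh (2t) - 1) / (2 cosh (2t) + 1)`,
so the equation for `μ` is equivalent to `cosh (μπ/2) = (1 - κ) / (2 (1 + κ))`, whose right side
exceeds `1` exactly for `κ ∈ (-1, -1/3)`. Hence `μ(κ) = (2/π) arcosh ((1 - κ) / (2 (1 + κ)))`,
which is continuous and blows up as `κ → -1⁺`.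
-/

open Real Set Filter

/-- The real hyperbolic cotangent. -/
noncomputable def rcoth (t : ℝ) : ℝ := Real.cosh t / Real.sinh t

open Topology

lemma rcoth_three_mul_div_rcoth {t : ℝ} (ht : t ≠ 0) :
    rcoth (3 * t) / rcoth t = (2 * cosh (2 * t) - 1) / (2 * cosh (2 * t) + 1) := by
  have hs : sinh t ≠ 0 := sinh_ne_zero.mpr ht
  have hc : 0 < cosh t := cosh_pos t
  rw [rcoth, rcoth, show 3 * t = 2 * t + t by ring, cosh_add, sinh_add, cosh_two_mul,
    sinh_two_mul, div_div_div_eq, div_eq_div_iff (by field_simp; positivity) (by positivity)]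
  linear_combination (-4 * sinh t * cosh t * (cosh t ^ 2 + sinh t ^ 2)) * cosh_sq_sub_sinh_sq t

lemma two_mul_sub_one_div_eq_neg_iff {c κ : ℝ} (hc : 0 ≤ c) (hκ : κ ≠ -1) :
    (2 * c - 1) / (2 * c + 1) = -κ ↔ c = (1 - κ) / (2 * (1 + κ)) := by
  have hκ' : 1 + κ ≠ 0 := fun h => hκ (by linarith)
  rw [div_eq_iff (by positivity), eq_div_iff (by simpa using hκ')]
  constructor <;> intro h <;> linarith

lemma tendsto_arcosh_atTop : Tendsto arcosh atTop atTop := by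
  refine tendsto_atTop_atTop.mpr fun b => ⟨cosh |b|, fun x hx => ?_⟩
  calc b ≤ |b| := le_abs_self b
    _ = arcosh (cosh |b|) := (arcosh_cosh (abs_nonneg b)).symm
    _ ≤ arcosh x := (arcosh_le_arcosh (cosh_pos _) ((cosh_pos _).trans_le hx)).mpr hx

/-- Solving `(2C - 1) / (2C + 1) = -κ` for `C = cosh (μπ/2)`. -/
noncomputable def coshOfContrast (κ : ℝ) : ℝ := (1 - κ) / (2 * (1 + κ))

noncomputable def muOfContrast (κ : ℝ) : ℝ := 2 / π * arcosh (coshOfContrast κ)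

lemma one_lt_coshOfContrast {κ : ℝ} (h₁ : -1 < κ) (h₂ : κ < -1 / 3) : 1 < coshOfContrast κ := by
  rw [coshOfContrast, one_lt_div (by linarith)]
  linarith

lemma continuousOn_coshOfContrast : ContinuousOn coshOfContrast (Ioi (-1)) :=
  ContinuousOn.div (by fun_prop) (by fun_prop) fun κ (hκ : -1 < κ) => by linarith

lemma tendsto_coshOfContrast : Tendsto coshOfContrast (𝓝[>] (-1)) atTop := by
  have hden : Tendsto (fun κ : ℝ => 2 * (1 + κ)) (𝓝[>] (-1)) (𝓝[>] 0) := by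
    refine tendsto_nhdsWithin_of_tendsto_nhds_of_eventually_within _ ?_ ?_
    · exact (Continuous.tendsto' (by fun_prop) _ _ (by norm_num)).mono_left nhdsWithin_le_nhds
    · filter_upwards [self_mem_nhdsWithin] with κ (hκ : -1 < κ)
      show 0 < 2 * (1 + κ)
      linarith
  have hnum : Tendsto (fun κ : ℝ => 1 - κ) (𝓝[>] (-1)) (𝓝 2) :=
    (Continuous.tendsto' (by fun_prop) _ _ (by norm_num)).mono_left nhdsWithin_le_nhds
  exact hnum.pos_mul_atTop two_pos (tendsto_inv_nhdsGT_zero.comp hden)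

lemma rcoth_ratio_eq_neg_iff {μ κ : ℝ} (hμ : μ ≠ 0) (hκ : κ ≠ -1) :
    rcoth (3 * μ * π / 4) / rcoth (μ * π / 4) = -κ ↔ cosh (μ * π / 2) = coshOfContrast κ := by
  have h := rcoth_three_mul_div_rcoth (t := μ * π / 4) (by positivity)
  rw [show 3 * (μ * π / 4) = 3 * μ * π / 4 by ring, show 2 * (μ * π / 4) = μ * π / 2 by ring] at h
  rw [h, two_mul_sub_one_div_eq_neg_iff (cosh_pos _).le hκ, coshOfContrast]

lemma cosh_muOfContrast {κ : ℝ} (h : 1 ≤ coshOfContrast κ) :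
    cosh (muOfContrast κ * π / 2) = coshOfContrast κ := by
  rw [muOfContrast, show 2 / π * arcosh (coshOfContrast κ) * π / 2 = arcosh (coshOfContrast κ) by
    field_simp, cosh_arcosh h]

lemma eq_muOfContrast_of_cosh_eq {μ κ : ℝ} (hμ : 0 ≤ μ)
    (h : cosh (μ * π / 2) = coshOfContrast κ) : μ = muOfContrast κ := by
  rw [muOfContrast, ← h, arcosh_cosh (by positivity)]
  field_simp

/-- For each contrast `κ ∈ (-1,-1/3)` the equation
`-κ = coth(3μπ/4)/coth(μπ/4)` has a unique solution `μ = μ(κ) > 0`; the map `κ ↦ μ(κ)` is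
continuous on `(-1,-1/3)` and `μ(κ) → +∞` as `κ → -1⁺`. -/
theorem stmt4_mu_of_kappa :
    ∃ m : ℝ → ℝ,
      (∀ κ ∈ Ioo (-1 : ℝ) (-1/3),
        0 < m κ ∧ rcoth (3 * m κ * π / 4) / rcoth (m κ * π / 4) = -κ ∧
        ∀ μ' : ℝ, 0 < μ' → rcoth (3 * μ' * π / 4) / rcoth (μ' * π / 4) = -κ → μ' = m κ) ∧
      ContinuousOn m (Ioo (-1 : ℝ) (-1/3)) ∧
      Tendsto m (nhdsWithin (-1 : ℝ) (Ioo (-1 : ℝ) (-1/3))) atTop := by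
  refine ⟨muOfContrast, fun κ ⟨h₁, h₂⟩ => ?_, ?_, ?_⟩
  · have hc := one_lt_coshOfContrast h₁ h₂
    have hκ : κ ≠ -1 := h₁.ne'
    have hpos : 0 < muOfContrast κ := mul_pos (by positivity) (arcosh_pos hc)
    refine ⟨hpos, (rcoth_ratio_eq_neg_iff hpos.ne' hκ).mpr (cosh_muOfContrast hc.le), ?_⟩
    intro μ hμ h
    exact eq_muOfContrast_of_cosh_eq hμ.le ((rcoth_ratio_eq_neg_iff hμ.ne' hκ).mp h)
  · refine continuousOn_const.mul (continuousOn_arcosh.comp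
      (continuousOn_coshOfContrast.mono Ioo_subset_Ioi_self) fun κ ⟨h₁, h₂⟩ => ?_)
    exact (one_lt_coshOfContrast h₁ h₂).le
  · exact (tendsto_arcosh_atTop.comp (tendsto_coshOfContrast.mono_left
      (nhdsWithin_mono _ Ioo_subset_Ioi_self))).const_mul_atTop (by positivity)
end

section
/- Let A : D(A) ⊆ H → H be a closed densely defined symmetric operator with D(A*) = span{s₊, s₋} ⊕ D(A), where the anti-hermitian boundary form q(u,v) = (A*u,v) - (u,A*v) satisfies q(s₊,s₋) = q(s₋,s₊) = 0, q(s₊,s₊) = -q(s₋,s₋) ≠ 0, and q(u,v) = 0 when v ∈ D(A). Then an operator 𝒜 with A ⊆ 𝒜 ⊆ A* and D(𝒜) = span{α₊ s₊ + α₋ s₋} ⊕ D(A) (with (α₊,α₋) ≠ (0,0)) is self-adjoint if and only if |α₊| = |α₋| ≠ 0. Consequently, the self-adjoint extensions of A are exactly the operators 𝒜(τ), τ ∈ ℝ, with domain D(𝒜(τ)) = span{s₊ + e^{iτ} s₋} ⊕ D(A) and 𝒜(τ) = A* restricted to this domain. -/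
/-!
The boundary form `q` is sesquilinear and vanishes as soon as one argument lies in `D(A)`, so on
`D(A*) = span{s₊, s₋} ⊕ D(A)` it is the indefinite form `conj p * p' - conj m * m'` of the
`s₊, s₋`-coordinates, times `q(s₊, s₊)`. On `span{α₊ s₊ + α₋ s₋} ⊕ D(A)` it is therefore a multiple
of `|α₊|² - |α₋|²`, which gives symmetry exactly when `|α₊| = |α₋|`. In that case, `q(u, ·) = 0`
on the domain forces the coordinates `(p, m)` of `u` to be proportional to `(α₊, α₋)`, i.e.
`u` lies in the domain. Normalising `α₊ = 1` leaves `α₋` on the unit circle, `α₋ = e^{iτ}`.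
-/

open scoped InnerProductSpace ComplexConjugate

/-- The boundary form `q(u,v) = (A*u, v) - (u, A*v)` on the domain of the adjoint. -/
noncomputable def qform {H : Type*} [NormedAddCommGroup H] [InnerProductSpace ℂ H]
    {Dstar : Submodule ℂ H} (Astar : Dstar →ₗ[ℂ] H) (u v : Dstar) : ℂ :=
  ⟪Astar u, (v : H)⟫_ℂ - ⟪(u : H), Astar v⟫_ℂ

/-- The domain `span{α₊ s₊ + α₋ s₋} ⊕ D(A)` of a candidate extension, viewed inside `D(A*)`. -/
def saDom {H : Type*} [NormedAddCommGroup H] [InnerProductSpace ℂ H]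
    (D : Submodule ℂ H) {Dstar : Submodule ℂ H} (sp sm : Dstar) (a b : ℂ) :
    Set Dstar :=
  {u | ∃ c : ℂ, ∃ w : D, (u : H) = c • (a • (sp : H) + b • (sm : H)) + (w : H)}

/-- Self-adjointness of the restriction of `A*` to a domain `Dom` with `A ⊆ 𝒜 ⊆ A*`:
`𝒜` is symmetric (the boundary form vanishes on `Dom × Dom`) and `D(𝒜*) = D(𝒜)`
(any `u ∈ D(A*)` that is `q`-orthogonal to `Dom` already lies in `Dom`). -/
def IsSelfAdjointExt {H : Type*} [NormedAddCommGroup H] [InnerProductSpace ℂ H]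
    {Dstar : Submodule ℂ H} (Astar : Dstar →ₗ[ℂ] H) (Dom : Set Dstar) : Prop :=
  (∀ u ∈ Dom, ∀ v ∈ Dom, qform Astar u v = 0) ∧
  (∀ u : Dstar, (∀ v ∈ Dom, qform Astar u v = 0) → u ∈ Dom)

lemma Complex.conj_mul_self_sub_eq (a b : ℂ) :
    conj a * a - conj b * b = ((‖a‖ ^ 2 - ‖b‖ ^ 2 : ℝ) : ℂ) := by
  push_cast
  rw [Complex.conj_mul', Complex.conj_mul']

lemma Complex.conj_mul_self_eq_iff {a b : ℂ} : conj a * a = conj b * b ↔ ‖a‖ = ‖b‖ := by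
  rw [← sub_eq_zero, Complex.conj_mul_self_sub_eq, Complex.ofReal_eq_zero, sub_eq_zero,
    sq_eq_sq₀ (norm_nonneg a) (norm_nonneg b)]

lemma Complex.mul_eq_mul_of_conj_mul_sub_eq_zero {p m a b : ℂ} (hab : ‖a‖ = ‖b‖) (ha : a ≠ 0)
    (h : conj p * a - conj m * b = 0) : p * b = m * a := by
  have hconj : p * conj a - m * conj b = 0 := by
    simpa [mul_comm] using congrArg conj h
  have hiso : conj a * a - conj b * b = 0 := sub_eq_zero.2 (Complex.conj_mul_self_eq_iff.2 hab)
  have : conj a * (p * b - m * a) = 0 := by linear_combination b * hconj - m * hiso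
  simpa [sub_eq_zero, ha] using this

section BoundaryForm

variable {H : Type*} [NormedAddCommGroup H] [InnerProductSpace ℂ H]
  {Dstar : Submodule ℂ H} (Astar : Dstar →ₗ[ℂ] H)

lemma qform_eq_neg_conj (u v : Dstar) : qform Astar u v = -conj (qform Astar v u) := by
  simp only [qform, map_sub, inner_conj_symm]
  ring

lemma qform_add_left (u u' v : Dstar) :
    qform Astar (u + u') v = qform Astar u v + qform Astar u' v := by
  simp only [qform, map_add, Submodule.coe_add, inner_add_left]
  ring

lemma qform_add_right (u v v' : Dstar) :
    qform Astar u (v + v') = qform Astar u v + qform Astar u v' := by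
  simp only [qform, map_add, Submodule.coe_add, inner_add_right]
  ring

lemma qform_smul_left (c : ℂ) (u v : Dstar) :
    qform Astar (c • u) v = conj c * qform Astar u v := by
  simp only [qform, map_smul, Submodule.coe_smul, inner_smul_left]
  ring

lemma qform_smul_right (c : ℂ) (u v : Dstar) :
    qform Astar u (c • v) = c * qform Astar u v := by
  simp only [qform, map_smul, Submodule.coe_smul, inner_smul_right]
  ring

end BoundaryForm

section Extensions

variable {H : Type*} [NormedAddCommGroup H] [InnerProductSpace ℂ H]
  {D Dstar : Submodule ℂ H} {sp sm : Dstar}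

lemma eq_add_inclusion_of_coe_eq (hD : D ≤ Dstar) {u : Dstar} {p m : ℂ} {w : D}
    (hu : (u : H) = p • (sp : H) + m • (sm : H) + (w : H)) :
    u = p • sp + m • sm + Submodule.inclusion hD w :=
  Subtype.ext (by simpa using hu)

lemma mem_saDom_iff {u : Dstar} {a b : ℂ} :
    u ∈ saDom D sp sm a b ↔
      ∃ c : ℂ, ∃ w : D, (u : H) = (c * a) • (sp : H) + (c * b) • (sm : H) + (w : H) := by
  simp only [saDom, Set.mem_ofPred_eq, smul_add, smul_smul]

lemma smul_add_smul_mem_saDom (a b : ℂ) : a • sp + b • sm ∈ saDom D sp sm a b :=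
  ⟨1, 0, by simp⟩

lemma saDom_mul_mul {k : ℂ} (hk : k ≠ 0) (a b : ℂ) :
    saDom D sp sm (k * a) (k * b) = saDom D sp sm a b := by
  have hscale : (k * a) • (sp : H) + (k * b) • (sm : H) = k • (a • (sp : H) + b • (sm : H)) := by
    rw [smul_add, smul_smul, smul_smul]
  ext u
  simp only [saDom, Set.mem_ofPred_eq, hscale, smul_smul]
  constructor
  · rintro ⟨c, w, hu⟩
    exact ⟨c * k, w, hu⟩
  · rintro ⟨c, w, hu⟩
    exact ⟨c / k, w, by rwa [div_mul_cancel₀ c hk]⟩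

variable (hD : D ≤ Dstar) (Astar : Dstar →ₗ[ℂ] H)
  (h0 : ∀ (u : Dstar) (v : D), qform Astar u (Submodule.inclusion hD v) = 0)
  (hpm : qform Astar sp sm = 0) (hmp : qform Astar sm sp = 0)
  (hppmm : qform Astar sp sp = -qform Astar sm sm)
include h0 hpm hmp hppmm

lemma qform_eq_of_coe_eq {u v : Dstar} {p m p' m' : ℂ} {w w' : D}
    (hu : (u : H) = p • (sp : H) + m • (sm : H) + (w : H))
    (hv : (v : H) = p' • (sp : H) + m' • (sm : H) + (w' : H)) :
    qform Astar u v = (conj p * p' - conj m * m') * qform Astar sp sp := by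
  have h0_left (w : D) (v : Dstar) : qform Astar (Submodule.inclusion hD w) v = 0 := by
    rw [qform_eq_neg_conj, h0, map_zero, neg_zero]
  rw [eq_add_inclusion_of_coe_eq hD hu, eq_add_inclusion_of_coe_eq hD hv]
  simp only [qform_add_left, qform_add_right, qform_smul_left, qform_smul_right,
    h0, h0_left, hpm, hmp, hppmm]
  ring

lemma qform_saDom_eq_zero_iff (hpp0 : qform Astar sp sp ≠ 0) (a b : ℂ) :
    (∀ u ∈ saDom D sp sm a b, ∀ v ∈ saDom D sp sm a b, qform Astar u v = 0) ↔ ‖a‖ = ‖b‖ := by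
  constructor
  · intro hsym
    have hq := hsym _ (smul_add_smul_mem_saDom a b) _ (smul_add_smul_mem_saDom a b)
    rw [qform_eq_of_coe_eq hD Astar h0 hpm hmp hppmm (p := a) (m := b) (p' := a) (m' := b)
      (w := 0) (w' := 0) (by simp) (by simp), mul_eq_zero, sub_eq_zero] at hq
    exact Complex.conj_mul_self_eq_iff.1 (hq.resolve_right hpp0)
  · rintro hab u hu v hv
    obtain ⟨c, w, hu⟩ := mem_saDom_iff.1 hu
    obtain ⟨c', w', hv⟩ := mem_saDom_iff.1 hv
    have hiso : conj a * a = conj b * b := Complex.conj_mul_self_eq_iff.2 hab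
    rw [qform_eq_of_coe_eq hD Astar h0 hpm hmp hppmm hu hv]
    simp only [map_mul]
    linear_combination (conj c * c' * qform Astar sp sp) * hiso

lemma mem_saDom_of_forall_qform_eq_zero (hpp0 : qform Astar sp sp ≠ 0)
    (hdecomp : ∀ u : Dstar, ∃ p m : ℂ, ∃ w : D, (u : H) = p • (sp : H) + m • (sm : H) + (w : H))
    {a b : ℂ} (hab : ‖a‖ = ‖b‖) (ha : a ≠ 0) {u : Dstar}
    (hu : ∀ v ∈ saDom D sp sm a b, qform Astar u v = 0) : u ∈ saDom D sp sm a b := by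
  obtain ⟨p, m, w, hw⟩ := hdecomp u
  have hq := hu _ (smul_add_smul_mem_saDom a b)
  rw [qform_eq_of_coe_eq hD Astar h0 hpm hmp hppmm (p' := a) (m' := b) (w' := 0) hw
    (by simp), mul_eq_zero] at hq
  have hprop := Complex.mul_eq_mul_of_conj_mul_sub_eq_zero hab ha (hq.resolve_right hpp0)
  refine mem_saDom_iff.2 ⟨p / a, w, ?_⟩
  rw [div_mul_cancel₀ p ha, div_mul_eq_mul_div, hprop, mul_div_cancel_right₀ m ha, hw]

theorem isSelfAdjointExt_saDom_iff (hpp0 : qform Astar sp sp ≠ 0)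
    (hdecomp : ∀ u : Dstar, ∃ p m : ℂ, ∃ w : D, (u : H) = p • (sp : H) + m • (sm : H) + (w : H))
    {a b : ℂ} (hne : (a, b) ≠ (0, 0)) :
    IsSelfAdjointExt Astar (saDom D sp sm a b) ↔ ‖a‖ = ‖b‖ ∧ a ≠ 0 := by
  have hsym := qform_saDom_eq_zero_iff hD Astar h0 hpm hmp hppmm hpp0 a b
  constructor
  · rintro ⟨hq, -⟩
    have hab := hsym.1 hq
    refine ⟨hab, fun ha => hne ?_⟩
    rw [ha, norm_zero, eq_comm, norm_eq_zero] at hab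
    rw [ha, hab]
  · rintro ⟨hab, ha⟩
    exact ⟨hsym.2 hab, fun u hu =>
      mem_saDom_of_forall_qform_eq_zero hD Astar h0 hpm hmp hppmm hpp0 hdecomp hab ha hu⟩

end Extensions

lemma saDom_eq_saDom_one_exp {H : Type*} [NormedAddCommGroup H] [InnerProductSpace ℂ H]
    {D Dstar : Submodule ℂ H} {sp sm : Dstar} {a b : ℂ} (hab : ‖a‖ = ‖b‖) (ha : a ≠ 0) :
    saDom D sp sm a b = saDom D sp sm 1 (Complex.exp ((b / a).arg * Complex.I)) := by
  have hnorm : ‖b / a‖ = 1 := by rw [norm_div, ← hab, div_self (norm_ne_zero_iff.2 ha)]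
  have hexp : Complex.exp ((b / a).arg * Complex.I) = b / a := by
    simpa only [hnorm, Complex.ofReal_one, one_mul] using Complex.norm_mul_exp_arg_mul_I (b / a)
  rw [hexp, ← saDom_mul_mul (inv_ne_zero ha), inv_mul_cancel₀ ha, inv_mul_eq_div]

theorem stmt6_selfadjoint_extensions_general
    {H : Type*} [NormedAddCommGroup H] [InnerProductSpace ℂ H]
    (D Dstar : Submodule ℂ H) (hD : D ≤ Dstar) (Astar : Dstar →ₗ[ℂ] H)
    (sp sm : Dstar)
    (h0 : ∀ (u : Dstar) (v : D), qform Astar u (Submodule.inclusion hD v) = 0)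
    (hpm : qform Astar sp sm = 0) (hmp : qform Astar sm sp = 0)
    (hppmm : qform Astar sp sp = -qform Astar sm sm)
    (hpp0 : qform Astar sp sp ≠ 0)
    (hdecomp : ∀ u : Dstar, ∃ a b : ℂ, ∃ w : D, (u : H) = a • (sp : H) + b • (sm : H) + (w : H)) :
    (∀ ap am : ℂ, (ap, am) ≠ (0, 0) →
      (IsSelfAdjointExt Astar (saDom D sp sm ap am) ↔
        ‖ap‖ = ‖am‖ ∧ ap ≠ 0)) ∧
    (∀ τ : ℝ, IsSelfAdjointExt Astar (saDom D sp sm 1 (Complex.exp (τ * Complex.I)))) ∧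
    (∀ ap am : ℂ, ‖ap‖ = ‖am‖ → ap ≠ 0 →
      ∃ τ : ℝ, saDom D sp sm ap am = saDom D sp sm 1 (Complex.exp (τ * Complex.I))) := by
  have hsa := fun ap am (hne : (ap, am) ≠ (0, 0)) =>
    isSelfAdjointExt_saDom_iff hD Astar h0 hpm hmp hppmm hpp0 hdecomp hne
  refine ⟨hsa, fun τ => ?_, fun ap am hab ha => ⟨_, saDom_eq_saDom_one_exp hab ha⟩⟩
  refine (hsa 1 _ (by simp)).2 ⟨?_, one_ne_zero⟩
  rw [Complex.norm_exp_ofReal_mul_I, norm_one]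

/-- Classification of the self-adjoint extensions: an operator `𝒜` with
`A ⊆ 𝒜 ⊆ A*` and `D(𝒜) = span{α₊s₊+α₋s₋} ⊕ D(A)`, `(α₊,α₋) ≠ (0,0)`, is self-adjoint iff
`|α₊| = |α₋| ≠ 0`; consequently the self-adjoint extensions of `A` are exactly the operators
`𝒜(τ)`, `τ ∈ ℝ`, with domain `span{s₊ + e^{iτ}s₋} ⊕ D(A)`. -/
theorem stmt6_selfadjoint_extensions
    {H : Type*} [NormedAddCommGroup H] [InnerProductSpace ℂ H] [CompleteSpace H]
    (D Dstar : Submodule ℂ H) (hD : D ≤ Dstar) (Astar : Dstar →ₗ[ℂ] H)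
    (hdense : Dense (D : Set H))
    (sp sm : Dstar)
    (h0 : ∀ (u : Dstar) (v : D), qform Astar u (Submodule.inclusion hD v) = 0)
    (hpm : qform Astar sp sm = 0) (hmp : qform Astar sm sp = 0)
    (hppmm : qform Astar sp sp = -qform Astar sm sm)
    (hpp0 : qform Astar sp sp ≠ 0)
    (hdecomp : ∀ u : Dstar, ∃ a b : ℂ, ∃ w : D, (u : H) = a • (sp : H) + b • (sm : H) + (w : H))
    (hindep : ∀ a b : ℂ, ∀ w : D, a • (sp : H) + b • (sm : H) + (w : H) = 0 → a = 0 ∧ b = 0) :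
    (∀ ap am : ℂ, (ap, am) ≠ (0, 0) →
      (IsSelfAdjointExt Astar (saDom D sp sm ap am) ↔
        ‖ap‖ = ‖am‖ ∧ ap ≠ 0)) ∧
    (∀ τ : ℝ, IsSelfAdjointExt Astar (saDom D sp sm 1 (Complex.exp (τ * Complex.I)))) ∧
    (∀ ap am : ℂ, ‖ap‖ = ‖am‖ → ap ≠ 0 →
      ∃ τ : ℝ, saDom D sp sm ap am = saDom D sp sm 1 (Complex.exp (τ * Complex.I))) :=
  stmt6_selfadjoint_extensions_general D Dstar hD Astar sp sm h0 hpm hmp hppmm hpp0 hdecomp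
end
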